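/- There is a constant P > 0 such that ‖u_A‖_{L^q(Ω)} ≤ P and ‖p_A‖_{L^q(Ω)} ≤ P for all measurable sets A ⊆ Ω and all solutions (u_A, y_A, p_A) of (P_A), where q > 6 is the exponent from the smoothing assumption. -/

import Mathlib

open MeasureTheory ENNReal Set Filter Metric Topology
open scoped Classical symmDiff NNReal

noncomputable section

namespace L0Control

variable {α : Type*} [MeasurableSpace α]

/-- The characteristic function `χ_A` of a set `A`, as a real-valued function. -/
def chi (A : Set α) (x : α) : ℝ := A.indicator (fun _ => (1 : ℝ)) x

/-- Pointwise multiplication of `u ∈ L²(μ)` by the characteristic function of `A`,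
as an element of `L²(μ)` (junk value `0` if `A` is not measurable). -/
def chiMul {μ : Measure α} (A : Set α) (u : Lp ℝ 2 μ) : Lp ℝ 2 μ :=
  if hA : MeasurableSet A then
    MemLp.toLp (A.indicator (u : α → ℝ)) ((Lp.memLp u).indicator hA)
  else 0

variable {Y : Type*} [NormedAddCommGroup Y] [InnerProductSpace ℝ Y]

/-- The objective functional
`J(u, A) = ½‖S(χ_A u) − y_d‖² + ∫_Ω (g(u(x)) + χ_A(x) β(x)) dx`,
with values in `EReal` (the `g`-part may be `+∞`). -/
def Jfun {μ : Measure α} (S : Lp ℝ 2 μ →L[ℝ] Y) (yd : Y) (g : ℝ → ℝ≥0∞) (β : α → ℝ)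
    (u : Lp ℝ 2 μ) (A : Set α) : EReal :=
  ((2⁻¹ * ‖S (chiMul A u) - yd‖ ^ 2 + ∫ x in A, β x ∂μ : ℝ) : EReal)
    + ((∫⁻ x, g (u x) ∂μ : ℝ≥0∞) : EReal)

/-- `u` minimizes `J(·, A)` over `L²(μ)`. -/
def IsMinimizer {μ : Measure α} (S : Lp ℝ 2 μ →L[ℝ] Y) (yd : Y) (g : ℝ → ℝ≥0∞) (β : α → ℝ)
    (A : Set α) (u : Lp ℝ 2 μ) : Prop :=
  ∀ v : Lp ℝ 2 μ, Jfun S yd g β u A ≤ Jfun S yd g β v A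

/-- `(u, y, p)` is a solution triple of the problem `(P_A)`:
`u` minimizes `J(·, A)`, `y = S(χ_A u)` is the state and `p = S*(y − y_d)` the adjoint state. -/
def IsSolution {μ : Measure α} [CompleteSpace Y] (S : Lp ℝ 2 μ →L[ℝ] Y) (yd : Y)
    (g : ℝ → ℝ≥0∞) (β : α → ℝ) (A : Set α) (u : Lp ℝ 2 μ) (y : Y) (p : Lp ℝ 2 μ) : Prop :=
  IsMinimizer S yd g β A u ∧ y = S (chiMul A u) ∧
    p = ContinuousLinearMap.adjoint S (y - yd)

/-- The value function `J(A) = inf_{u ∈ L²} J(u, A)`. -/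
def Jval {μ : Measure α} (S : Lp ℝ 2 μ →L[ℝ] Y) (yd : Y) (g : ℝ → ℝ≥0∞) (β : α → ℝ)
    (A : Set α) : EReal :=
  ⨅ u : Lp ℝ 2 μ, Jfun S yd g β u A

/-- `H̄(p) = min_{u ∈ ℝ} (p·u + g(u)) = −g*(−p)`, with values in `EReal`. -/
def Hbar (g : ℝ → ℝ≥0∞) (p : ℝ) : EReal :=
  ⨅ u : ℝ, ((p * u : ℝ) : EReal) + (g u : EReal)

/-- `H̄(p)` as a real number (it is finite under the standing assumptions). -/
def HbarR (g : ℝ → ℝ≥0∞) (p : ℝ) : ℝ := (Hbar g p).toReal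

/-- Absolute value on `EReal`. -/
def eabs (x : EReal) : EReal := max x (-x)

end L0Control

open L0Control

/-!
Comparing `u_A` with the control `0` gives `∫ g(u_A) ≤ ½‖y_d‖²`; since strong convexity and
`g(0) = 0` force `g(u) ≥ μ₀ u²/2`, this bounds `u_A` in `L²` uniformly in `A`, and the smoothing
property of `S*S` then bounds `p_A = S*S(χ_A u_A) - S*y_d` in `L^q`. To transfer the bound to
`u_A`, test the first-order optimality condition with `χ_{Eᶜ} u_A` for every measurable `E`: this
gives `g(u_A) + χ_A p_A u_A ≤ 0` a.e., hence `μ₀ u_A²/2 ≤ |p_A| |u_A|`, i.e.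
`|u_A| ≤ (2/μ₀) |p_A|` a.e.
-/

theorem le_of_forall_Ioo_le_add_mul {a b c : ℝ} (h : ∀ t ∈ Ioo (0 : ℝ) 1, a ≤ b + t * c) :
    a ≤ b := by
  have hlim : Tendsto (fun t : ℝ => b + t * c) (𝓝[>] 0) (𝓝 b) := by
    have : Tendsto (fun t : ℝ => b + t * c) (𝓝 0) (𝓝 (b + 0 * c)) :=
      tendsto_const_nhds.add (tendsto_id.mul_const c)
    simpa using this.mono_left nhdsWithin_le_nhds
  refine ge_of_tendsto hlim ?_
  filter_upwards [Ioo_mem_nhdsGT (zero_lt_one' ℝ)] with t ht using h t ht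

section VariationalInequality

variable {E Y : Type*} [AddCommGroup E] [Module ℝ E] [NormedAddCommGroup Y]
  [InnerProductSpace ℝ Y]

theorem sub_le_inner_of_forall_segment_le (L : E →ₗ[ℝ] Y) (yd : Y) {G : E → ℝ} {u w : E}
    (hconv : ∀ t ∈ Ioo (0 : ℝ) 1, G (t • w + (1 - t) • u) ≤ t * G w + (1 - t) * G u)
    (hmin : ∀ t ∈ Ioo (0 : ℝ) 1, 2⁻¹ * ‖L u - yd‖ ^ 2 + G u ≤
      2⁻¹ * ‖L (t • w + (1 - t) • u) - yd‖ ^ 2 + G (t • w + (1 - t) • u)) :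
    G u - G w ≤ inner ℝ (L u - yd) (L w - L u) := by
  refine le_of_forall_Ioo_le_add_mul (c := 2⁻¹ * ‖L w - L u‖ ^ 2) fun t ht => ?_
  have hsplit : L (t • w + (1 - t) • u) - yd = (L u - yd) + t • (L w - L u) := by
    simp only [map_add, map_smul, sub_smul, one_smul, smul_sub, map_sub]
    abel
  have hexp := norm_add_sq_real (L u - yd) (t • (L w - L u))
  rw [real_inner_smul_right, norm_smul, Real.norm_eq_abs, mul_pow, sq_abs] at hexp
  have hmin_t := hmin t ht
  rw [hsplit, hexp] at hmin_t
  have hconv_t := hconv t ht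
  have hscaled : t * (G u - G w) ≤
      t * (inner ℝ (L u - yd) (L w - L u) + t * (2⁻¹ * ‖L w - L u‖ ^ 2)) := by
    nlinarith
  exact le_of_mul_le_mul_left hscaled ht.1

end VariationalInequality

namespace MeasureTheory.L2

variable {α : Type*} [MeasurableSpace α] {μ : Measure α}

theorem real_inner_eq_integral (u v : α →₂[μ] ℝ) : inner ℝ u v = ∫ x, u x * v x ∂μ := by
  simp [L2.inner_def, mul_comm]

theorem norm_sq_eq_integral (u : α →₂[μ] ℝ) : ‖u‖ ^ 2 = ∫ x, u x ^ 2 ∂μ := by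
  rw [← real_inner_self_eq_norm_sq, real_inner_eq_integral]
  simp only [sq]

end MeasureTheory.L2

namespace L0Control

def IsStronglyConvexWith (μ₀ : ℝ) (g : ℝ → ℝ≥0∞) : Prop :=
  ∀ u v l : ℝ, l ∈ Ioo (0 : ℝ) 1 →
    ENNReal.ofReal (μ₀ / 2 * l * (1 - l) * (u - v) ^ 2) + g (l * u + (1 - l) * v)
      ≤ ENNReal.ofReal l * g u + ENNReal.ofReal (1 - l) * g v

namespace IsStronglyConvexWith

variable {μ₀ : ℝ} {g : ℝ → ℝ≥0∞}

theorem le_add (hg : IsStronglyConvexWith μ₀ g) {l : ℝ} (hl : l ∈ Ioo (0 : ℝ) 1) (u v : ℝ) :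
    g (l * u + (1 - l) * v) ≤ ENNReal.ofReal l * g u + ENNReal.ofReal (1 - l) * g v :=
  le_add_self.trans (hg u v l hl)

theorem ofReal_mul_sq_le (hg : IsStronglyConvexWith μ₀ g) (hg0 : g 0 = 0) (u : ℝ) :
    ENNReal.ofReal (μ₀ / 2 * u ^ 2) ≤ g u := by
  rcases eq_or_ne (g u) ⊤ with hu | hu
  · simp [hu]
  rw [← ENNReal.ofReal_toReal hu]
  refine ENNReal.ofReal_le_ofReal (le_of_forall_Ioo_le_add_mul (c := μ₀ / 2 * u ^ 2) fun l hl => ?_)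
  have h := le_self_add.trans (hg u 0 l hl)
  simp only [sub_zero, mul_zero, add_zero, hg0] at h
  rw [← ENNReal.ofReal_toReal hu, ← ENNReal.ofReal_mul hl.1.le,
    ENNReal.ofReal_le_ofReal_iff (mul_nonneg hl.1.le ENNReal.toReal_nonneg)] at h
  nlinarith [hl.1]

end IsStronglyConvexWith

section Lp

variable {α : Type*} [MeasurableSpace α] {μ : Measure α} {A : Set α}

theorem coeFn_chiMul (hA : MeasurableSet A) (u : Lp ℝ 2 μ) :
    ⇑(chiMul A u) =ᵐ[μ] A.indicator u := by
  rw [chiMul, dif_pos hA]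
  exact MemLp.coeFn_toLp _

theorem norm_chiMul_le (A : Set α) (u : Lp ℝ 2 μ) : ‖chiMul A u‖ ≤ ‖u‖ := by
  by_cases hA : MeasurableSet A
  · rw [Lp.norm_def, Lp.norm_def, eLpNorm_congr_ae (coeFn_chiMul hA u)]
    exact ENNReal.toReal_mono (Lp.eLpNorm_ne_top u) (eLpNorm_indicator_le _)
  · simp [chiMul, hA]

def chiMulₗ (hA : MeasurableSet A) : Lp ℝ 2 μ →ₗ[ℝ] Lp ℝ 2 μ where
  toFun := chiMul A
  map_add' u v := by
    refine Lp.ext ?_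
    filter_upwards [coeFn_chiMul hA (u + v), coeFn_chiMul hA u, coeFn_chiMul hA v,
      Lp.coeFn_add u v, Lp.coeFn_add (chiMul A u) (chiMul A v)] with x h h₁ h₂ h₃ h₄
    rw [h, h₄, Pi.add_apply, h₁, h₂, indicator_apply, indicator_apply, indicator_apply, h₃]
    split_ifs <;> simp
  map_smul' c u := by
    refine Lp.ext ?_
    filter_upwards [coeFn_chiMul hA (c • u), coeFn_chiMul hA u, Lp.coeFn_smul c u,
      Lp.coeFn_smul c (chiMul A u)] with x h h₁ h₂ h₃
    rw [h, RingHom.id_apply, h₃, Pi.smul_apply, h₁, indicator_apply, indicator_apply, h₂]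
    split_ifs <;> simp

theorem chiMul_zero (A : Set α) : chiMul A (0 : Lp ℝ 2 μ) = 0 := by
  by_cases hA : MeasurableSet A
  · exact map_zero (chiMulₗ hA)
  · simp [chiMul, hA]

variable {g : ℝ → ℝ≥0∞}

theorem lintegral_comp_zero (hg0 : g 0 = 0) : ∫⁻ x, g ((0 : Lp ℝ 2 μ) x) ∂μ = 0 := by
  refine (lintegral_congr_ae ?_).trans lintegral_zero
  filter_upwards [Lp.coeFn_zero ℝ 2 μ] with x hx
  rw [hx, Pi.zero_apply, hg0]

theorem ofReal_mul_norm_sq_le_lintegral {μ₀ : ℝ} (hμ₀ : 0 ≤ μ₀)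
    (hg : ∀ u, ENNReal.ofReal (μ₀ / 2 * u ^ 2) ≤ g u) (u : Lp ℝ 2 μ) :
    ENNReal.ofReal (μ₀ / 2 * ‖u‖ ^ 2) ≤ ∫⁻ x, g (u x) ∂μ := by
  rw [L2.norm_sq_eq_integral, ← integral_const_mul,
    ofReal_integral_eq_lintegral_ofReal ((Lp.memLp u).integrable_sq.const_mul _)
      (ae_of_all _ fun x => by positivity)]
  exact lintegral_mono fun x => hg (u x)

theorem lintegral_comp_add_smul_le {μ₀ : ℝ} (hg : IsStronglyConvexWith μ₀ g) (hgm : Measurable g)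
    {t : ℝ} (ht : t ∈ Ioo (0 : ℝ) 1) (u w : Lp ℝ 2 μ) :
    ∫⁻ x, g ((t • w + (1 - t) • u : Lp ℝ 2 μ) x) ∂μ ≤
      ENNReal.ofReal t * ∫⁻ x, g (w x) ∂μ + ENNReal.ofReal (1 - t) * ∫⁻ x, g (u x) ∂μ := by
  have hpt : ∀ᵐ x ∂μ, g ((t • w + (1 - t) • u : Lp ℝ 2 μ) x) ≤
      ENNReal.ofReal t * g (w x) + ENNReal.ofReal (1 - t) * g (u x) := by
    filter_upwards [Lp.coeFn_add (t • w) ((1 - t) • u), Lp.coeFn_smul t w,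
      Lp.coeFn_smul (1 - t) u] with x h h₁ h₂
    rw [h, Pi.add_apply, h₁, h₂]
    exact hg.le_add ht (w x) (u x)
  refine (lintegral_mono_ae hpt).trans_eq ?_
  have hwm := (Lp.aestronglyMeasurable w).aemeasurable
  rw [lintegral_add_left' (by fun_prop),
    lintegral_const_mul' _ _ ENNReal.ofReal_ne_top, lintegral_const_mul' _ _ ENNReal.ofReal_ne_top]

theorem toReal_lintegral_eq_integral (hgm : Measurable g) {u : Lp ℝ 2 μ}
    (hu : ∫⁻ x, g (u x) ∂μ ≠ ⊤) : (∫⁻ x, g (u x) ∂μ).toReal = ∫ x, (g (u x)).toReal ∂μ :=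
  (integral_toReal (hgm.comp_aemeasurable (Lp.aestronglyMeasurable u).aemeasurable)
    (ae_lt_top' (hgm.comp_aemeasurable (Lp.aestronglyMeasurable u).aemeasurable) hu)).symm

end Lp

section Minimizer

variable {α : Type*} [MeasurableSpace α] {μ : Measure α} {A E : Set α} {g : ℝ → ℝ≥0∞}

theorem lintegral_comp_chiMul_le (hg0 : g 0 = 0) (hE : MeasurableSet E) (u : Lp ℝ 2 μ) :
    ∫⁻ x, g (chiMul E u x) ∂μ ≤ ∫⁻ x, g (u x) ∂μ := by
  refine lintegral_mono_ae ?_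
  filter_upwards [coeFn_chiMul hE u] with x hx
  rw [hx, indicator_apply]
  split_ifs
  · exact le_rfl
  · simp [hg0]

theorem toReal_lintegral_sub_toReal_lintegral_chiMul_compl (hgm : Measurable g) (hg0 : g 0 = 0)
    (hE : MeasurableSet E) {u : Lp ℝ 2 μ} (hu : ∫⁻ x, g (u x) ∂μ ≠ ⊤) :
    (∫⁻ x, g (u x) ∂μ).toReal - (∫⁻ x, g (chiMul Eᶜ u x) ∂μ).toReal =
      ∫ x in E, (g (u x)).toReal ∂μ := by
  have hw := ne_top_of_le_ne_top hu (lintegral_comp_chiMul_le hg0 hE.compl u)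
  have hint : Integrable (fun x => (g (u x)).toReal) μ :=
    integrable_toReal_of_lintegral_ne_top
      (hgm.comp_aemeasurable (Lp.aestronglyMeasurable u).aemeasurable) hu
  have hcompl : (fun x => (g (chiMul Eᶜ u x)).toReal) =ᵐ[μ]
      Eᶜ.indicator fun x => (g (u x)).toReal := by
    filter_upwards [coeFn_chiMul hE.compl u] with x hx
    rw [hx, indicator_apply, indicator_apply]
    split_ifs <;> simp [hg0]
  rw [toReal_lintegral_eq_integral hgm hu, toReal_lintegral_eq_integral hgm hw,
    integral_congr_ae hcompl, integral_indicator hE.compl, ← integral_add_compl hE hint,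
    add_sub_cancel_right]

variable {Y : Type*} [NormedAddCommGroup Y] [InnerProductSpace ℝ Y]
  {S : Lp ℝ 2 μ →L[ℝ] Y} {yd : Y} {β : α → ℝ} {u v w : Lp ℝ 2 μ}

theorem Jfun_eq_coe (hv : ∫⁻ x, g (v x) ∂μ ≠ ⊤) :
    Jfun S yd g β v A = ((2⁻¹ * ‖S (chiMul A v) - yd‖ ^ 2 + ∫ x in A, β x ∂μ +
      (∫⁻ x, g (v x) ∂μ).toReal : ℝ) : EReal) := by
  rw [Jfun, ← EReal.coe_ennreal_toReal hv, ← EReal.coe_add]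

theorem Jfun_eq_top (hv : ∫⁻ x, g (v x) ∂μ = ⊤) : Jfun S yd g β v A = ⊤ := by
  rw [Jfun, hv, EReal.coe_ennreal_top, EReal.coe_add_top]

theorem IsMinimizer.lintegral_ne_top_of_ne_top (hmin : IsMinimizer S yd g β A u)
    (hv : ∫⁻ x, g (v x) ∂μ ≠ ⊤) : ∫⁻ x, g (u x) ∂μ ≠ ⊤ := by
  intro hu
  have h := hmin v
  rw [Jfun_eq_top hu, Jfun_eq_coe hv, top_le_iff] at h
  exact EReal.coe_ne_top _ h

theorem IsMinimizer.le_of_lintegral_ne_top (hmin : IsMinimizer S yd g β A u)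
    (hv : ∫⁻ x, g (v x) ∂μ ≠ ⊤) :
    2⁻¹ * ‖S (chiMul A u) - yd‖ ^ 2 + (∫⁻ x, g (u x) ∂μ).toReal ≤
      2⁻¹ * ‖S (chiMul A v) - yd‖ ^ 2 + (∫⁻ x, g (v x) ∂μ).toReal := by
  have h := hmin v
  rw [Jfun_eq_coe (hmin.lintegral_ne_top_of_ne_top hv), Jfun_eq_coe hv, EReal.coe_le_coe_iff] at h
  linarith

theorem IsMinimizer.lintegral_ne_top (hg0 : g 0 = 0) (hmin : IsMinimizer S yd g β A u) :
    ∫⁻ x, g (u x) ∂μ ≠ ⊤ :=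
  hmin.lintegral_ne_top_of_ne_top (v := 0)
    ((lintegral_comp_zero hg0).trans_ne ENNReal.zero_ne_top)

theorem IsMinimizer.toReal_lintegral_add_le (hg0 : g 0 = 0) (hmin : IsMinimizer S yd g β A u) :
    (∫⁻ x, g (u x) ∂μ).toReal + 2⁻¹ * ‖S (chiMul A u) - yd‖ ^ 2 ≤ 2⁻¹ * ‖yd‖ ^ 2 := by
  have h := hmin.le_of_lintegral_ne_top (v := 0)
    ((lintegral_comp_zero hg0).trans_ne ENNReal.zero_ne_top)
  rw [chiMul_zero, map_zero, zero_sub, norm_neg, lintegral_comp_zero hg0, ENNReal.toReal_zero,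
    add_zero] at h
  linarith

theorem IsMinimizer.norm_le {μ₀ : ℝ} (hμ₀ : 0 < μ₀) (hg : IsStronglyConvexWith μ₀ g)
    (hg0 : g 0 = 0) (hmin : IsMinimizer S yd g β A u) : ‖u‖ ≤ ‖yd‖ / √μ₀ := by
  have h := ENNReal.toReal_mono (hmin.lintegral_ne_top hg0)
    (ofReal_mul_norm_sq_le_lintegral hμ₀.le (hg.ofReal_mul_sq_le hg0) u)
  rw [ENNReal.toReal_ofReal (by positivity)] at h
  rw [le_div_iff₀ (Real.sqrt_pos.2 hμ₀), ← pow_le_pow_iff_left₀ (by positivity) (norm_nonneg _)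
    two_ne_zero, mul_pow, Real.sq_sqrt hμ₀.le]
  nlinarith [hmin.toReal_lintegral_add_le hg0]

theorem IsMinimizer.toReal_lintegral_sub_le_inner {μ₀ : ℝ} (hg : IsStronglyConvexWith μ₀ g)
    (hgm : Measurable g) (hA : MeasurableSet A) (hmin : IsMinimizer S yd g β A u)
    (hw : ∫⁻ x, g (w x) ∂μ ≠ ⊤) :
    (∫⁻ x, g (u x) ∂μ).toReal - (∫⁻ x, g (w x) ∂μ).toReal ≤
      inner ℝ (S (chiMul A u) - yd) (S (chiMul A w) - S (chiMul A u)) := by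
  have hu := hmin.lintegral_ne_top_of_ne_top hw
  have hseg : ∀ t ∈ Ioo (0 : ℝ) 1, ∫⁻ x, g ((t • w + (1 - t) • u : Lp ℝ 2 μ) x) ∂μ ≤
      ENNReal.ofReal t * ∫⁻ x, g (w x) ∂μ + ENNReal.ofReal (1 - t) * ∫⁻ x, g (u x) ∂μ :=
    fun t ht => lintegral_comp_add_smul_le hg hgm ht u w
  have hseg_ne_top : ∀ t ∈ Ioo (0 : ℝ) 1,
      ∫⁻ x, g ((t • w + (1 - t) • u : Lp ℝ 2 μ) x) ∂μ ≠ ⊤ :=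
    fun t ht => ne_top_of_le_ne_top (by finiteness) (hseg t ht)
  refine sub_le_inner_of_forall_segment_le ((S : Lp ℝ 2 μ →ₗ[ℝ] Y) ∘ₗ chiMulₗ hA) yd
    (G := fun v => (∫⁻ x, g (v x) ∂μ).toReal) (fun t ht => ?_)
    (fun t ht => hmin.le_of_lintegral_ne_top (hseg_ne_top t ht))
  have h := ENNReal.toReal_mono (by finiteness) (hseg t ht)
  rwa [ENNReal.toReal_add (by finiteness) (by finiteness), ENNReal.toReal_mul, ENNReal.toReal_mul,
    ENNReal.toReal_ofReal ht.1.le, ENNReal.toReal_ofReal (by linarith [ht.2])] at h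

end Minimizer

section Solution

variable {α : Type*} [MeasurableSpace α] {μ : Measure α} {A E : Set α} {g : ℝ → ℝ≥0∞}
  {Y : Type*} [NormedAddCommGroup Y] [InnerProductSpace ℝ Y] [CompleteSpace Y]
  {S : Lp ℝ 2 μ →L[ℝ] Y} {yd : Y} {β : α → ℝ} {u p : Lp ℝ 2 μ} {y : Y}

theorem IsSolution.inner_eq_integral (hsol : IsSolution S yd g β A u y p) (v : Lp ℝ 2 μ) :
    inner ℝ (y - yd) (S v) = ∫ x, p x * v x ∂μ := by
  rw [← L2.real_inner_eq_integral, hsol.2.2, ContinuousLinearMap.adjoint_inner_left]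

/-- The variational inequality tested with `χ_{Eᶜ} u`, i.e. with the control switched off on `E`. -/
theorem IsSolution.setIntegral_le {μ₀ : ℝ} (hg : IsStronglyConvexWith μ₀ g) (hgm : Measurable g)
    (hg0 : g 0 = 0) (hA : MeasurableSet A) (hE : MeasurableSet E)
    (hsol : IsSolution S yd g β A u y p) :
    ∫ x in E, (g (u x)).toReal ∂μ ≤ ∫ x in E, -(p x * A.indicator u x) ∂μ := by
  have hu := hsol.1.lintegral_ne_top hg0
  have hw := ne_top_of_le_ne_top hu (lintegral_comp_chiMul_le hg0 hE.compl u)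
  have hvi := hsol.1.toReal_lintegral_sub_le_inner hg hgm hA hw
  rw [toReal_lintegral_sub_toReal_lintegral_chiMul_compl hgm hg0 hE hu, ← map_sub, ← hsol.2.1,
    hsol.inner_eq_integral] at hvi
  refine hvi.trans_eq ?_
  rw [← integral_indicator hE]
  refine integral_congr_ae ?_
  filter_upwards [Lp.coeFn_sub (chiMul A (chiMul Eᶜ u)) (chiMul A u), coeFn_chiMul hA u,
    coeFn_chiMul hA (chiMul Eᶜ u), coeFn_chiMul hE.compl u] with x h h₁ h₂ h₃
  rw [h, Pi.sub_apply, h₁, h₂]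
  simp only [indicator_apply, h₃, mem_compl_iff]
  split_ifs <;> ring

theorem IsSolution.ae_toReal_le {μ₀ : ℝ} (hg : IsStronglyConvexWith μ₀ g) (hgm : Measurable g)
    (hg0 : g 0 = 0) (hA : MeasurableSet A) (hsol : IsSolution S yd g β A u y p) :
    (fun x => (g (u x)).toReal) ≤ᵐ[μ] fun x => -(p x * A.indicator u x) :=
  ae_le_of_forall_setIntegral_le
    (integrable_toReal_of_lintegral_ne_top
      (hgm.comp_aemeasurable (Lp.aestronglyMeasurable u).aemeasurable)
      (hsol.1.lintegral_ne_top hg0))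
    ((Lp.memLp p).integrable_mul ((Lp.memLp u).indicator hA)).neg
    fun _ hE _ => hsol.setIntegral_le hg hgm hg0 hA hE

theorem IsSolution.ae_norm_le {μ₀ : ℝ} (hμ₀ : 0 < μ₀) (hg : IsStronglyConvexWith μ₀ g)
    (hgm : Measurable g) (hg0 : g 0 = 0) (hA : MeasurableSet A)
    (hsol : IsSolution S yd g β A u y p) : ∀ᵐ x ∂μ, ‖u x‖ ≤ 2 / μ₀ * ‖p x‖ := by
  filter_upwards [hsol.ae_toReal_le hg hgm hg0 hA,
    ae_lt_top' (hgm.comp_aemeasurable (Lp.aestronglyMeasurable u).aemeasurable)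
      (hsol.1.lintegral_ne_top hg0)] with x hle hfin
  have hlow : μ₀ / 2 * u x ^ 2 ≤ (g (u x)).toReal :=
    (ENNReal.ofReal_le_iff_le_toReal hfin.ne).mp (hg.ofReal_mul_sq_le hg0 (u x))
  have hprod : -(p x * A.indicator u x) ≤ ‖p x‖ * ‖u x‖ := by
    rw [indicator_apply]
    split_ifs
    · exact (neg_le_abs _).trans_eq (abs_mul _ _)
    · simp only [mul_zero, neg_zero]
      positivity
  rw [Real.norm_eq_abs, Real.norm_eq_abs] at hprod ⊢
  rw [← sq_abs] at hlow
  rcases (abs_nonneg (u x)).eq_or_lt with hu0 | hu0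
  · rw [← hu0]
    positivity
  · rw [div_mul_eq_mul_div, le_div_iff₀ hμ₀]
    nlinarith

theorem IsSolution.eLpNorm_le {q : ℝ≥0∞} (hq : 1 ≤ q) (hsol : IsSolution S yd g β A u y p) :
    eLpNorm p q μ ≤ eLpNorm (ContinuousLinearMap.adjoint S (S (chiMul A u))) q μ +
      eLpNorm (ContinuousLinearMap.adjoint S yd) q μ := by
  obtain ⟨-, rfl, rfl⟩ := hsol
  rw [map_sub]
  have hp := Lp.coeFn_sub (ContinuousLinearMap.adjoint S (S (chiMul A u)))
    (ContinuousLinearMap.adjoint S yd)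
  rw [eLpNorm_congr_ae hp]
  exact eLpNorm_sub_le (Lp.aestronglyMeasurable _) (Lp.aestronglyMeasurable _) hq

end Solution

end L0Control

theorem uniform_Lq_bounds_general
    {d : ℕ} {Ω : Set (EuclideanSpace ℝ (Fin d))}
    {Y : Type*} [NormedAddCommGroup Y] [InnerProductSpace ℝ Y] [CompleteSpace Y]
    (S : Lp ℝ 2 (volume.restrict Ω) →L[ℝ] Y) (yd : Y)
    (g : ℝ → ℝ≥0∞)
    (hg_lsc : LowerSemicontinuous g)
    (hg_zero : ∀ u : ℝ, g u = 0 ↔ u = 0)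
    (β : EuclideanSpace ℝ (Fin d) → ℝ)
    (μ₀ : ℝ) (hμ₀ : 0 < μ₀)
    (hg_sconv : ∀ u v l : ℝ, l ∈ Set.Ioo (0 : ℝ) 1 →
      ENNReal.ofReal (μ₀ / 2 * l * (1 - l) * (u - v) ^ 2) + g (l * u + (1 - l) * v)
        ≤ ENNReal.ofReal l * g u + ENNReal.ofReal (1 - l) * g v)
    (q : ℝ≥0∞) (hq : 6 < q) (CS : ℝ)
    (hSS : ∀ w : Lp ℝ 2 (volume.restrict Ω),
      eLpNorm (⇑(ContinuousLinearMap.adjoint S (S w))) q (volume.restrict Ω) ≤ ENNReal.ofReal (CS * ‖w‖))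
    (hSyd : MemLp (⇑(ContinuousLinearMap.adjoint S yd)) q (volume.restrict Ω))
    :
    ∃ P : ℝ, 0 < P ∧
      ∀ A : Set (EuclideanSpace ℝ (Fin d)), MeasurableSet A → A ⊆ Ω →
        ∀ (uA : Lp ℝ 2 (volume.restrict Ω)) (yA : Y) (pA : Lp ℝ 2 (volume.restrict Ω)),
          IsSolution S yd g β A uA yA pA →
            eLpNorm (⇑uA) q (volume.restrict Ω) ≤ ENNReal.ofReal P ∧
              eLpNorm (⇑pA) q (volume.restrict Ω) ≤ ENNReal.ofReal P := by
  have hgm : Measurable g := hg_lsc.measurable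
  have hg0 : g 0 = 0 := (hg_zero 0).mpr rfl
  have hq1 : 1 ≤ q := le_trans (by norm_num) hq.le
  obtain ⟨T, hT, hT0⟩ : ∃ T : ℝ, eLpNorm (ContinuousLinearMap.adjoint S yd) q
      (volume.restrict Ω) = ENNReal.ofReal T ∧ 0 ≤ T :=
    ⟨_, (ENNReal.ofReal_toReal hSyd.2.ne).symm, ENNReal.toReal_nonneg⟩
  set C := |CS| * (‖yd‖ / √μ₀) + T with hC
  have hC0 : 0 ≤ C := by positivity
  have hC' : 0 ≤ 2 / μ₀ * C := by positivity
  refine ⟨C + 2 / μ₀ * C + 1, by positivity, fun A hA _ u y p hsol => ?_⟩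
  have hp : eLpNorm p q (volume.restrict Ω) ≤ ENNReal.ofReal C := by
    refine (hsol.eLpNorm_le hq1).trans ?_
    rw [hT, hC, ENNReal.ofReal_add (by positivity) hT0]
    gcongr
    refine (hSS _).trans (ENNReal.ofReal_le_ofReal ?_)
    calc CS * ‖chiMul A u‖ ≤ |CS| * ‖u‖ :=
          mul_le_mul (le_abs_self CS) (norm_chiMul_le A u) (norm_nonneg _) (abs_nonneg CS)
      _ ≤ |CS| * (‖yd‖ / √μ₀) := by gcongr; exact hsol.1.norm_le hμ₀ hg_sconv hg0
  have hu : eLpNorm u q (volume.restrict Ω) ≤ ENNReal.ofReal (2 / μ₀ * C) := by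
    refine (eLpNorm_le_mul_eLpNorm_of_ae_le_mul
      (hsol.ae_norm_le hμ₀ hg_sconv hgm hg0 hA) q).trans ?_
    rw [ENNReal.ofReal_mul (by positivity)]
    gcongr
  exact ⟨hu.trans (ENNReal.ofReal_le_ofReal (by linarith)),
    hp.trans (ENNReal.ofReal_le_ofReal (by linarith))⟩

/-- Uniform `L^q` bounds: there is `P > 0` with
`‖u_A‖_{L^q} ≤ P` and `‖p_A‖_{L^q} ≤ P` for all measurable `A ⊆ Ω`
and all solutions of `(P_A)`, where `q > 6` is the exponent from the smoothing assumption. -/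
theorem uniform_Lq_bounds
    {d : ℕ} {Ω : Set (EuclideanSpace ℝ (Fin d))}
    (hΩm : MeasurableSet Ω) (hΩfin : volume Ω < ⊤)
    {Y : Type*} [NormedAddCommGroup Y] [InnerProductSpace ℝ Y] [CompleteSpace Y]
    (S : Lp ℝ 2 (volume.restrict Ω) →L[ℝ] Y) (yd : Y)
    (g : ℝ → ℝ≥0∞)
    (hg_proper : ∃ u : ℝ, g u ≠ ⊤)
    (hg_lsc : LowerSemicontinuous g)
    (hg_zero : ∀ u : ℝ, g u = 0 ↔ u = 0)
    (β : EuclideanSpace ℝ (Fin d) → ℝ)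
    (hβ : Integrable β (volume.restrict Ω))
    (μ₀ : ℝ) (hμ₀ : 0 < μ₀)
    (hg_sconv : ∀ u v l : ℝ, l ∈ Set.Ioo (0 : ℝ) 1 →
      ENNReal.ofReal (μ₀ / 2 * l * (1 - l) * (u - v) ^ 2) + g (l * u + (1 - l) * v)
        ≤ ENNReal.ofReal l * g u + ENNReal.ofReal (1 - l) * g v)
    (q : ℝ≥0∞) (hq : 6 < q) (CS : ℝ)
    (hSS : ∀ w : Lp ℝ 2 (volume.restrict Ω),
      eLpNorm (⇑(ContinuousLinearMap.adjoint S (S w))) q (volume.restrict Ω) ≤ ENNReal.ofReal (CS * ‖w‖))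
    (hSyd : MemLp (⇑(ContinuousLinearMap.adjoint S yd)) q (volume.restrict Ω))
    :
    ∃ P : ℝ, 0 < P ∧
      ∀ A : Set (EuclideanSpace ℝ (Fin d)), MeasurableSet A → A ⊆ Ω →
        ∀ (uA : Lp ℝ 2 (volume.restrict Ω)) (yA : Y) (pA : Lp ℝ 2 (volume.restrict Ω)),
          IsSolution S yd g β A uA yA pA →
            eLpNorm (⇑uA) q (volume.restrict Ω) ≤ ENNReal.ofReal P ∧
              eLpNorm (⇑pA) q (volume.restrict Ω) ≤ ENNReal.ofReal P :=
  uniform_Lq_bounds_general S yd g hg_lsc hg_zero β μ₀ hμ₀ hg_sconv q hq CS hSS hSyd
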